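/- For a causal coupling π of μ and ν, and any l of the form l(x,y) = ∑_j ∑_{t=1}^{T-1} h^j_t(y_{≤t}) Δ_{t+1}M^j(x_{≤t+1}) with h^j adapted bounded and M^j μ-martingales, one has E^π[l(x,y)] = 0; conversely if π is not causal there exists such an l with E^π[l] > 0, so sup_{l∈L(μ)} E^π[l(x,y)] equals 0 if π is causal and +∞ otherwise (since L(μ) is a cone). -/

import Mathlib

/-!
All sums are organised along the cylinders `{x_{≤t} = a}`: a sum over paths is the `μ a / μ(cyl a)`
weighted sum of its cylinder sums, so it suffices to argue cylinder by cylinder.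
If `π` is causal, on each cylinder `y_{≤t}` is conditionally uncorrelated with `x`, and the
martingale increment `Δ_{t+1}M` has conditional mean zero, so each `h_t(y) Δ_{t+1}M(x)` has
`π`-expectation zero. If `π` is not causal, some `f(y_{≤t})` and `g(x)` are conditionally
correlated on some cylinder `{x_{≤t} = a}`. For the Doob martingale
`M_s = E^μ[1_{x_{≤t} = a} g | x_{≤s}]` the test `f(y) (M_{T-1} - M_t) ∈ L(μ)` has as
`π`-expectation this conditional covariance times `μ(x_{≤t} = a)`, which is nonzero; since `L(μ)`
is a cone, its sign and size can then be chosen at will.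
-/

open scoped BigOperators

/-- Shannon entropy of a probability vector on a finite set. -/
noncomputable def shannonEntropy {α : Type*} [Fintype α] (p : α → ℝ) : ℝ :=
  -∑ a, p a * Real.log (p a)

/-- A coupling of `μ` and `ν`. -/
def IsCouplingOf {A B : Type*} [Fintype A] [Fintype B]
    (μ : A → ℝ) (ν : B → ℝ) (π : A × B → ℝ) : Prop :=
  (∀ p, 0 ≤ π p) ∧ (∀ a, ∑ b, π (a, b) = μ a) ∧ (∀ b, ∑ a, π (a, b) = ν b)

/-- Expected cost `E^π[c]`. -/
noncomputable def expCost {A : Type*} [Fintype A] (π : A → ℝ) (c : A → ℝ) : ℝ :=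
  ∑ a, π a * c a

/-- `f` depends only on the coordinates of the path up to (and including) time `t`. -/
def DepOn {Z : Type*} {T : ℕ} (t : ℕ) (f : (Fin T → Z) → ℝ) : Prop :=
  ∀ z z' : Fin T → Z, (∀ s : Fin T, (s : ℕ) ≤ t → z s = z' s) → f z = f z'

/-- Causality of a coupling on path spaces: for each `t` with `t + 1 < T`,
conditionally on `x_{≤t}`, the past `y_{≤t}` is independent of the whole path `x`. -/
def CausalCoupling {X Y : Type*} {T : ℕ} [Fintype X] [Fintype Y] [DecidableEq X]
    (π : ((Fin T → X) × (Fin T → Y)) → ℝ) : Prop :=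
  ∀ t : ℕ, t + 1 < T →
    ∀ f : (Fin T → Y) → ℝ, DepOn t f →
    ∀ g : (Fin T → X) → ℝ, ∀ a : Fin T → X,
      (∑ p : (Fin T → X) × (Fin T → Y),
          if ∀ s : Fin T, (s : ℕ) ≤ t → p.1 s = a s then π p * f p.2 * g p.1 else 0) *
        (∑ p : (Fin T → X) × (Fin T → Y),
          if ∀ s : Fin T, (s : ℕ) ≤ t → p.1 s = a s then π p else 0)
      = (∑ p : (Fin T → X) × (Fin T → Y),
          if ∀ s : Fin T, (s : ℕ) ≤ t → p.1 s = a s then π p * f p.2 else 0) *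
        (∑ p : (Fin T → X) × (Fin T → Y),
          if ∀ s : Fin T, (s : ℕ) ≤ t → p.1 s = a s then π p * g p.1 else 0)

/-- `M` is an adapted `μ`-martingale w.r.t. the canonical filtration:
`M t` depends only on coordinates up to time `t`, and
`E^μ[(M_{t+1} - M_t) φ] = 0` for every `φ` depending only on `x_{≤t}`. -/
def IsMuMartingale {X : Type*} {T : ℕ} [Fintype X]
    (μ : (Fin T → X) → ℝ) (M : ℕ → (Fin T → X) → ℝ) : Prop :=
  (∀ t : ℕ, DepOn t (M t)) ∧
  ∀ t : ℕ, t + 1 < T → ∀ φ : (Fin T → X) → ℝ, DepOn t φ →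
    ∑ x, μ x * φ x * (M (t + 1) x - M t x) = 0

/-- Membership in the set `L(μ)` of causality test functions:
`l(x,y) = ∑_j ∑_{t=1}^{T-1} h^j_t(y_{≤t}) Δ_{t+1}M^j(x_{≤t+1})`
with `h^j` adapted bounded and `M^j` adapted `μ`-martingales. -/
def InLmu {X Y : Type*} {T : ℕ} [Fintype X] [Fintype Y]
    (μ : (Fin T → X) → ℝ) (l : ((Fin T → X) × (Fin T → Y)) → ℝ) : Prop :=
  ∃ (J : ℕ) (h : Fin J → ℕ → (Fin T → Y) → ℝ) (M : Fin J → ℕ → (Fin T → X) → ℝ),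
    (∀ j t, DepOn t (h j t)) ∧ (∀ j, IsMuMartingale μ (M j)) ∧
    l = fun p => ∑ j, ∑ t ∈ Finset.range (T - 1), h j t p.2 * (M j (t + 1) p.1 - M j t p.1)

section Cylinder

variable {X β : Type*} {T : ℕ} [DecidableEq X] [Fintype β]

/-- With `k = Prod.fst` these are the conditional sums appearing in `CausalCoupling`. -/
def cylSum (t : ℕ) (k : β → Fin T → X) (w : β → ℝ) (a : Fin T → X) : ℝ :=
  ∑ b, if ∀ s : Fin T, (s : ℕ) ≤ t → k b s = a s then w b else 0

def cylInd (t : ℕ) (a x : Fin T → X) : ℝ :=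
  if ∀ s : Fin T, (s : ℕ) ≤ t → x s = a s then 1 else 0

theorem DepOn.mono {Z : Type*} {t t' : ℕ} {f : (Fin T → Z) → ℝ} (hf : DepOn t f) (h : t ≤ t') :
    DepOn t' f :=
  fun z z' hz => hf z z' fun s hs => hz s (hs.trans h)

theorem depOn_cylSum (t : ℕ) (k : β → Fin T → X) (w : β → ℝ) : DepOn t (cylSum t k w) := by
  intro z z' hz
  refine Finset.sum_congr rfl fun b _ => if_congr ⟨fun h s hs => ?_, fun h s hs => ?_⟩ rfl rfl
  · rw [h s hs, hz s hs]
  · rw [h s hs, hz s hs]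

theorem depOn_cylInd (t : ℕ) (a : Fin T → X) : DepOn t (cylInd t a) := by
  intro z z' hz
  refine if_congr ⟨fun h s hs => ?_, fun h s hs => ?_⟩ rfl rfl
  · rw [← hz s hs, h s hs]
  · rw [hz s hs, h s hs]

theorem cylSum_eq_sum_mul_cylInd (t : ℕ) (k : β → Fin T → X) (w : β → ℝ) (a : Fin T → X) :
    cylSum t k w a = ∑ b, w b * cylInd t a (k b) := by
  simp only [cylSum, cylInd, mul_ite, mul_one, mul_zero]

theorem cylSum_mul_depOn {t : ℕ} (k : β → Fin T → X) (w : β → ℝ) {φ : (Fin T → X) → ℝ}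
    (hφ : DepOn t φ) (a : Fin T → X) :
    cylSum t k (fun b => w b * φ (k b)) a = cylSum t k w a * φ a := by
  rw [cylSum, cylSum, Finset.sum_mul]
  refine Finset.sum_congr rfl fun b _ => ?_
  split_ifs with h
  · rw [hφ _ _ h]
  · rw [zero_mul]

theorem cylSum_last [Fintype X] (w : (Fin T → X) → ℝ) (x : Fin T → X) :
    cylSum (T - 1) id w x = w x := by
  have hcyl : ∀ x' : Fin T → X, (∀ s : Fin T, (s : ℕ) ≤ T - 1 → x' s = x s) ↔ x' = x :=
    fun x' => ⟨fun h => funext fun s => h s (by omega), fun h _ _ => h ▸ rfl⟩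
  simp only [cylSum, id, hcyl, Finset.sum_ite_eq', Finset.mem_univ, if_true]

theorem eq_zero_of_cylSum_eq_zero {t : ℕ} {k : β → Fin T → X} {w : β → ℝ} (hw : ∀ b, 0 ≤ w b)
    {a : Fin T → X} (h : cylSum t k w a = 0) {b : β}
    (hb : ∀ s : Fin T, (s : ℕ) ≤ t → k b s = a s) : w b = 0 := by
  have := (Finset.sum_eq_zero_iff_of_nonneg fun b' _ => ?_).mp h b (Finset.mem_univ b)
  · rwa [if_pos hb] at this
  · split_ifs
    exacts [hw b', le_rfl]

end Cylinder

section Averaging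

variable {X β : Type*} {T : ℕ} [Fintype X] [DecidableEq X] [Fintype β]

theorem sum_div_cylSum_mul_ite {μ : (Fin T → X) → ℝ} (hμ : ∀ x, 0 ≤ μ x) (t : ℕ)
    (x : Fin T → X) {c : ℝ} (hc : μ x = 0 → c = 0) :
    ∑ a, μ a / cylSum t id μ a * (if ∀ s : Fin T, (s : ℕ) ≤ t → x s = a s then c else 0) = c := by
  have hterm : ∀ a, μ a / cylSum t id μ a *
      (if ∀ s : Fin T, (s : ℕ) ≤ t → x s = a s then c else 0) =
      (if ∀ s : Fin T, (s : ℕ) ≤ t → a s = x s then μ a else 0) * (c / cylSum t id μ x) := by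
    intro a
    by_cases h : ∀ s : Fin T, (s : ℕ) ≤ t → x s = a s
    · rw [if_pos h, if_pos fun s hs => (h s hs).symm, depOn_cylSum t id μ x a h]
      ring
    · rw [if_neg h, if_neg fun h' => h fun s hs => (h' s hs).symm, mul_zero, zero_mul]
  rw [Finset.sum_congr rfl fun a _ => hterm a, ← Finset.sum_mul]
  change cylSum t id μ x * (c / cylSum t id μ x) = c
  by_cases hD : cylSum t id μ x = 0
  · rw [hc (eq_zero_of_cylSum_eq_zero (k := id) hμ hD fun _ _ => rfl), zero_div, mul_zero]
  · field_simp

theorem sum_eq_sum_div_cylSum_mul {μ : (Fin T → X) → ℝ} (hμ : ∀ x, 0 ≤ μ x) (t : ℕ)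
    (k : β → Fin T → X) {w : β → ℝ} (hw : ∀ b, μ (k b) = 0 → w b = 0) :
    ∑ b, w b = ∑ a, μ a / cylSum t id μ a * cylSum t k w a := by
  calc ∑ b, w b
      = ∑ b, ∑ a, μ a / cylSum t id μ a *
          (if ∀ s : Fin T, (s : ℕ) ≤ t → k b s = a s then w b else 0) :=
        Finset.sum_congr rfl fun b _ => (sum_div_cylSum_mul_ite hμ t (k b) (hw b)).symm
    _ = ∑ a, μ a / cylSum t id μ a * cylSum t k w a := by
        rw [Finset.sum_comm]
        simp only [← Finset.mul_sum]
        rfl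

theorem sum_eq_of_cylSum_eq {μ : (Fin T → X) → ℝ} (hμ : ∀ x, 0 ≤ μ x) (t : ℕ)
    (k : β → Fin T → X) {w w' : β → ℝ} (hw : ∀ b, μ (k b) = 0 → w b = 0)
    (hw' : ∀ b, μ (k b) = 0 → w' b = 0)
    (h : ∀ a, cylSum t id μ a ≠ 0 → cylSum t k w a = cylSum t k w' a) :
    ∑ b, w b = ∑ b, w' b := by
  rw [sum_eq_sum_div_cylSum_mul hμ t k hw, sum_eq_sum_div_cylSum_mul hμ t k hw']
  refine Finset.sum_congr rfl fun a _ => ?_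
  by_cases hD : cylSum t id μ a = 0
  · rw [hD, div_zero, zero_mul, zero_mul]
  · rw [h a hD]

end Averaging

section CondExp

variable {X : Type*} {T : ℕ} [Fintype X] [DecidableEq X]

/-- `E^μ[G | x_{≤t}]`, equal to `0` on `μ`-null cylinders. -/
noncomputable def condExpUpTo (μ G : (Fin T → X) → ℝ) (t : ℕ) (x : Fin T → X) : ℝ :=
  cylSum t id (fun x' => μ x' * G x') x / cylSum t id μ x

theorem depOn_condExpUpTo (μ G : (Fin T → X) → ℝ) (t : ℕ) : DepOn t (condExpUpTo μ G t) :=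
  fun z z' hz => by
    rw [condExpUpTo, condExpUpTo, depOn_cylSum t id _ z z' hz, depOn_cylSum t id μ z z' hz]

theorem sum_mul_condExpUpTo {μ : (Fin T → X) → ℝ} (hμ : ∀ x, 0 ≤ μ x) (G : (Fin T → X) → ℝ)
    {t : ℕ} {ψ : (Fin T → X) → ℝ} (hψ : DepOn t ψ) :
    ∑ x, μ x * condExpUpTo μ G t x * ψ x = ∑ x, μ x * G x * ψ x := by
  refine sum_eq_of_cylSum_eq hμ t id (fun x (hx : μ x = 0) => by rw [hx, zero_mul, zero_mul])
    (fun x (hx : μ x = 0) => by rw [hx, zero_mul, zero_mul]) fun a hD => ?_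
  calc cylSum t id (fun x => μ x * condExpUpTo μ G t x * ψ x) a
      = cylSum t id (fun x => μ x * condExpUpTo μ G t x) a * ψ a := cylSum_mul_depOn id _ hψ a
    _ = cylSum t id μ a * condExpUpTo μ G t a * ψ a :=
        congrArg (· * ψ a) (cylSum_mul_depOn id μ (depOn_condExpUpTo μ G t) a)
    _ = cylSum t id (fun x => μ x * G x * ψ x) a := by
        rw [condExpUpTo, mul_div_cancel₀ _ hD]
        exact (cylSum_mul_depOn id _ hψ a).symm

theorem isMuMartingale_condExpUpTo {μ : (Fin T → X) → ℝ} (hμ : ∀ x, 0 ≤ μ x)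
    (G : (Fin T → X) → ℝ) : IsMuMartingale μ (condExpUpTo μ G) := by
  refine ⟨depOn_condExpUpTo μ G, fun t _ φ hφ => ?_⟩
  have hsplit : ∑ x, μ x * φ x * (condExpUpTo μ G (t + 1) x - condExpUpTo μ G t x) =
      ∑ x, μ x * condExpUpTo μ G (t + 1) x * φ x - ∑ x, μ x * condExpUpTo μ G t x * φ x := by
    rw [← Finset.sum_sub_distrib]
    exact Finset.sum_congr rfl fun x _ => by ring
  rw [hsplit, sum_mul_condExpUpTo hμ G hφ, sum_mul_condExpUpTo hμ G (hφ.mono t.le_succ), sub_self]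

theorem condExpUpTo_last (μ G : (Fin T → X) → ℝ) {x : Fin T → X} (hx : μ x ≠ 0) :
    condExpUpTo μ G (T - 1) x = G x := by
  rw [condExpUpTo, cylSum_last, cylSum_last, mul_div_cancel_left₀ _ hx]

theorem condExpUpTo_cylInd_mul (μ g : (Fin T → X) → ℝ) (t : ℕ) (a x : Fin T → X) :
    condExpUpTo μ (fun x' => cylInd t a x' * g x') t x =
      cylInd t a x * (cylSum t id (fun x' => μ x' * g x') a / cylSum t id μ a) := by
  have hnum : cylSum t id (fun x' => μ x' * (cylInd t a x' * g x')) x =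
      cylSum t id (fun x' => μ x' * g x') x * cylInd t a x := by
    rw [← cylSum_mul_depOn id _ (depOn_cylInd t a)]
    exact congrArg (cylSum t id · x) (funext fun x' => by simp only [id]; ring)
  rw [condExpUpTo, hnum]
  by_cases hx : ∀ s : Fin T, (s : ℕ) ≤ t → x s = a s
  · rw [depOn_cylSum t id _ x a hx, depOn_cylSum t id μ x a hx]
    ring
  · simp only [cylInd, if_neg hx, mul_zero, zero_mul, zero_div]

end CondExp

section Coupling

variable {X Y : Type*} {T : ℕ} [Fintype X] [Fintype Y]
  {μ : (Fin T → X) → ℝ} {ν : (Fin T → Y) → ℝ} {π : (Fin T → X) × (Fin T → Y) → ℝ}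

theorem IsCouplingOf.eq_zero_of_fst (hπ : IsCouplingOf μ ν π) {p : (Fin T → X) × (Fin T → Y)}
    (hp : μ p.1 = 0) : π p = 0 := by
  have hle : π p ≤ μ p.1 := by
    rw [← hπ.2.1 p.1]
    exact Finset.single_le_sum (f := fun y => π (p.1, y)) (fun y _ => hπ.1 _)
      (Finset.mem_univ p.2)
  exact le_antisymm (hle.trans_eq hp) (hπ.1 p)

theorem IsCouplingOf.cylSum_fst_mul [DecidableEq X] (hπ : IsCouplingOf μ ν π) (t : ℕ)
    (g : (Fin T → X) → ℝ) (a : Fin T → X) :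
    cylSum t Prod.fst (fun p => π p * g p.1) a = cylSum t id (fun x => μ x * g x) a := by
  rw [cylSum, Fintype.sum_prod_type]
  refine Finset.sum_congr rfl fun x _ => ?_
  by_cases h : ∀ s : Fin T, (s : ℕ) ≤ t → x s = a s
  · simp only [id, if_pos h, ← Finset.sum_mul, hπ.2.1 x]
  · simp only [id, if_neg h, Finset.sum_const_zero]

theorem IsCouplingOf.cylSum_fst [DecidableEq X] (hπ : IsCouplingOf μ ν π) (t : ℕ)
    (a : Fin T → X) :
    cylSum t Prod.fst π a = cylSum t id μ a := by
  simpa using hπ.cylSum_fst_mul t 1 a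

theorem IsCouplingOf.causalCoupling_iff [DecidableEq X] (hπ : IsCouplingOf μ ν π) :
    CausalCoupling π ↔ ∀ t, t + 1 < T → ∀ f : (Fin T → Y) → ℝ, DepOn t f →
      ∀ (g : (Fin T → X) → ℝ) (a : Fin T → X),
      cylSum t Prod.fst (fun p => π p * f p.2 * g p.1) a * cylSum t id μ a =
        cylSum t Prod.fst (fun p => π p * f p.2) a * cylSum t id (fun x => μ x * g x) a := by
  simp only [← hπ.cylSum_fst, ← hπ.cylSum_fst_mul]
  rfl

end Coupling

section TestFunctions

variable {X Y : Type*} {T : ℕ} [Fintype X] [Fintype Y]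

theorem expCost_const_mul (π l : (Fin T → X) × (Fin T → Y) → ℝ) (c : ℝ) :
    expCost π (fun p => c * l p) = c * expCost π l := by
  rw [expCost, expCost, Finset.mul_sum]
  exact Finset.sum_congr rfl fun p _ => by ring

theorem InLmu.const_mul {μ : (Fin T → X) → ℝ} {l : (Fin T → X) × (Fin T → Y) → ℝ}
    (hl : InLmu μ l) (c : ℝ) : InLmu μ (fun p => c * l p) := by
  obtain ⟨J, h, M, hh, hM, rfl⟩ := hl
  refine ⟨J, fun j t y => c * h j t y, M,
    fun j t z z' hz => congrArg (c * ·) (hh j t z z' hz), hM, ?_⟩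
  funext p
  simp only [Finset.mul_sum, mul_assoc]

theorem inLmu_zero (μ : (Fin T → X) → ℝ) :
    InLmu μ (fun _ : (Fin T → X) × (Fin T → Y) => 0) :=
  ⟨0, fun _ _ _ => 0, fun _ _ _ => 0, fun _ _ _ _ _ => rfl, finZeroElim,
    funext fun _ => (Fin.sum_univ_zero _).symm⟩

theorem inLmu_mul_increment {μ : (Fin T → X) → ℝ} {M : ℕ → (Fin T → X) → ℝ}
    (hM : IsMuMartingale μ M) {t : ℕ} (ht : t ≤ T - 1) {f : (Fin T → Y) → ℝ} (hf : DepOn t f) :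
    InLmu μ (fun p => f p.2 * (M (T - 1) p.1 - M t p.1)) := by
  refine ⟨1, fun _ s => if t ≤ s then f else 0, fun _ => M, fun _ s => ?_, fun _ => hM, ?_⟩
  · dsimp only
    split_ifs with hts
    exacts [hf.mono hts, fun _ _ _ => rfl]
  · funext p
    rw [Fin.sum_univ_one]
    simp only [ite_apply, Pi.zero_apply, ite_mul, zero_mul]
    rw [← Finset.sum_filter, ← Finset.mul_sum]
    have hIco : (Finset.range (T - 1)).filter (t ≤ ·) = Finset.Ico t (T - 1) := by
      ext s
      simp only [Finset.mem_filter, Finset.mem_range, Finset.mem_Ico]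
      omega
    rw [hIco, Finset.sum_Ico_sub (fun s => M s p.1) ht]

end TestFunctions

section Characterization

variable {X Y : Type*} {T : ℕ} [Fintype X] [Fintype Y] [DecidableEq X]
  {μ : (Fin T → X) → ℝ} {ν : (Fin T → Y) → ℝ} {π : (Fin T → X) × (Fin T → Y) → ℝ}

theorem IsMuMartingale.cylSum_increment_eq_zero {M : ℕ → (Fin T → X) → ℝ}
    (hM : IsMuMartingale μ M) {t : ℕ} (ht : t + 1 < T) (a : Fin T → X) :
    cylSum t id (fun x => μ x * (M (t + 1) x - M t x)) a = 0 := by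
  rw [cylSum_eq_sum_mul_cylInd, ← hM.2 t ht _ (depOn_cylInd t a)]
  exact Finset.sum_congr rfl fun x _ => by simp only [id]; ring

theorem sum_mul_increment_eq_zero_of_causalCoupling (hμ : ∀ x, 0 ≤ μ x)
    (hπ : IsCouplingOf μ ν π) (hc : CausalCoupling π) {t : ℕ} (ht : t + 1 < T)
    {h : (Fin T → Y) → ℝ} (hh : DepOn t h) {M : ℕ → (Fin T → X) → ℝ}
    (hM : IsMuMartingale μ M) :
    ∑ p, π p * h p.2 * (M (t + 1) p.1 - M t p.1) = 0 := by
  have hcyl : ∀ a, cylSum t id μ a ≠ 0 →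
      cylSum t Prod.fst (fun p => π p * h p.2 * (M (t + 1) p.1 - M t p.1)) a = 0 := by
    intro a hD
    have key := hπ.causalCoupling_iff.mp hc t ht h hh (fun x => M (t + 1) x - M t x) a
    rw [hM.cylSum_increment_eq_zero ht a, mul_zero] at key
    exact (mul_eq_zero.mp key).resolve_right hD
  calc ∑ p, π p * h p.2 * (M (t + 1) p.1 - M t p.1)
      = ∑ _p : (Fin T → X) × (Fin T → Y), (0 : ℝ) :=
        sum_eq_of_cylSum_eq hμ t Prod.fst
          (fun p hp => by rw [hπ.eq_zero_of_fst hp, zero_mul, zero_mul]) (fun _ _ => rfl)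
          fun a hD => (hcyl a hD).trans (Finset.sum_eq_zero fun _ _ => ite_self 0).symm
    _ = 0 := Finset.sum_const_zero

theorem expCost_eq_zero_of_causalCoupling (hμ : ∀ x, 0 ≤ μ x) (hπ : IsCouplingOf μ ν π)
    (hc : CausalCoupling π) {l : (Fin T → X) × (Fin T → Y) → ℝ} (hl : InLmu μ l) :
    expCost π l = 0 := by
  obtain ⟨J, h, M, hh, hM, rfl⟩ := hl
  simp only [expCost, Finset.mul_sum, ← mul_assoc]
  rw [Finset.sum_comm]
  refine Finset.sum_eq_zero fun j _ => ?_
  rw [Finset.sum_comm]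
  refine Finset.sum_eq_zero fun t ht => ?_
  have ht' : t + 1 < T := by have := Finset.mem_range.mp ht; omega
  exact sum_mul_increment_eq_zero_of_causalCoupling hμ hπ hc ht' (hh j t) (hM j)

theorem expCost_mul_increment_condExpUpTo (hπ : IsCouplingOf μ ν π) (t : ℕ)
    (f : (Fin T → Y) → ℝ) (g : (Fin T → X) → ℝ) (a : Fin T → X) :
    expCost π (fun p => f p.2 *
        (condExpUpTo μ (fun x => cylInd t a x * g x) (T - 1) p.1 -
          condExpUpTo μ (fun x => cylInd t a x * g x) t p.1)) =
      cylSum t Prod.fst (fun p => π p * f p.2 * g p.1) a -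
        cylSum t Prod.fst (fun p => π p * f p.2) a *
          (cylSum t id (fun x => μ x * g x) a / cylSum t id μ a) := by
  have hlast : ∀ p : (Fin T → X) × (Fin T → Y),
      π p * (f p.2 * condExpUpTo μ (fun x => cylInd t a x * g x) (T - 1) p.1) =
        π p * f p.2 * g p.1 * cylInd t a p.1 := by
    intro p
    by_cases hp : μ p.1 = 0
    · rw [hπ.eq_zero_of_fst hp]
      ring
    · rw [condExpUpTo_last μ _ hp]
      ring
  have hcurrent : ∀ p : (Fin T → X) × (Fin T → Y),
      π p * (f p.2 * condExpUpTo μ (fun x => cylInd t a x * g x) t p.1) =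
        π p * f p.2 * cylInd t a p.1 *
          (cylSum t id (fun x => μ x * g x) a / cylSum t id μ a) := by
    intro p
    rw [condExpUpTo_cylInd_mul]
    ring
  simp only [expCost, mul_sub, Finset.sum_sub_distrib, hlast, hcurrent, ← Finset.sum_mul]
  rw [cylSum_eq_sum_mul_cylInd t Prod.fst, cylSum_eq_sum_mul_cylInd t Prod.fst]

theorem exists_inLmu_expCost_ne_zero (hμ : ∀ x, 0 ≤ μ x) (hπ : IsCouplingOf μ ν π)
    (hnc : ¬ CausalCoupling π) : ∃ l, InLmu μ l ∧ expCost π l ≠ 0 := by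
  rw [hπ.causalCoupling_iff] at hnc
  push Not at hnc
  obtain ⟨t, ht, f, hf, g, a, hne⟩ := hnc
  have hm : cylSum t id μ a ≠ 0 := by
    intro hm
    have hB : cylSum t id (fun x => μ x * g x) a = 0 := by
      refine Finset.sum_eq_zero fun x _ => ?_
      split_ifs with hx
      · change μ x * g x = 0
        rw [eq_zero_of_cylSum_eq_zero (k := id) hμ hm hx, zero_mul]
      · rfl
    exact hne (by rw [hm, hB, mul_zero, mul_zero])
  refine ⟨_, inLmu_mul_increment
    (isMuMartingale_condExpUpTo hμ fun x => cylInd t a x * g x) (by omega) hf, ?_⟩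
  rw [expCost_mul_increment_condExpUpTo hπ, sub_ne_zero]
  contrapose! hne
  rw [hne]
  field_simp

theorem exists_inLmu_expCost_pos (hμ : ∀ x, 0 ≤ μ x) (hπ : IsCouplingOf μ ν π)
    (hnc : ¬ CausalCoupling π) : ∃ l, InLmu μ l ∧ 0 < expCost π l := by
  obtain ⟨l, hl, hne⟩ := exists_inLmu_expCost_ne_zero hμ hπ hnc
  rcases hne.lt_or_gt with hneg | hpos
  · refine ⟨_, hl.const_mul (-1), ?_⟩
    rw [expCost_const_mul]
    linarith
  · exact ⟨l, hl, hpos⟩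

end Characterization

section Supremum

variable {X Y : Type*} {T : ℕ} [Fintype X] [Fintype Y]
  {μ : (Fin T → X) → ℝ} {π : (Fin T → X) × (Fin T → Y) → ℝ}

theorem iSup_expCost_eq_zero (hL : ∀ l, InLmu μ l → expCost π l = 0) :
    ⨆ l : {l // InLmu μ l}, (expCost π l.1 : EReal) = 0 := by
  have : Nonempty {l // InLmu μ l} := ⟨⟨_, inLmu_zero (Y := Y) μ⟩⟩
  exact (iSup_congr fun l => by rw [hL l.1 l.2, EReal.coe_zero]).trans iSup_const

theorem iSup_expCost_eq_top {l : (Fin T → X) × (Fin T → Y) → ℝ} (hl : InLmu μ l)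
    (hpos : 0 < expCost π l) : ⨆ l : {l // InLmu μ l}, (expCost π l.1 : EReal) = ⊤ := by
  refine iSup_eq_top.mpr fun b hb => ?_
  obtain ⟨r, hbr, -⟩ := EReal.lt_iff_exists_real_btwn.mp hb
  obtain ⟨n, hn⟩ := exists_nat_gt (r / expCost π l)
  refine ⟨⟨_, hl.const_mul n⟩, hbr.trans ?_⟩
  rw [expCost_const_mul, EReal.coe_lt_coe_iff]
  exact (div_lt_iff₀ hpos).mp hn

end Supremum

open Classical in
theorem causal_test_characteristic_function_general
    {X Y : Type*} {T : ℕ} [Fintype X] [Fintype Y] [DecidableEq X]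
    (μ : (Fin T → X) → ℝ) (ν : (Fin T → Y) → ℝ)
    (hμpos : ∀ x, 0 ≤ μ x)
    (π : ((Fin T → X) × (Fin T → Y)) → ℝ) (hπ : IsCouplingOf μ ν π) :
    (CausalCoupling π → ∀ l, InLmu μ l → expCost π l = 0) ∧
    (¬ CausalCoupling π → ∃ l, InLmu μ l ∧ 0 < expCost π l) ∧
    ((⨆ l : {l // InLmu μ l}, ((expCost π l.1 : ℝ) : EReal))
      = if CausalCoupling π then (0 : EReal) else ⊤) := by
  have hcausal : CausalCoupling π → ∀ l, InLmu μ l → expCost π l = 0 :=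
    fun hc _ hl => expCost_eq_zero_of_causalCoupling hμpos hπ hc hl
  have hnoncausal : ¬ CausalCoupling π → ∃ l, InLmu μ l ∧ 0 < expCost π l :=
    exists_inLmu_expCost_pos hμpos hπ
  refine ⟨hcausal, hnoncausal, ?_⟩
  split_ifs with hc
  · exact iSup_expCost_eq_zero (hcausal hc)
  · obtain ⟨l, hl, hpos⟩ := hnoncausal hc
    exact iSup_expCost_eq_top hl hpos

open Classical in
/-- For a causal coupling `π` and any `l ∈ L(μ)`, `E^π[l] = 0`; conversely, if
`π` is not causal there is `l ∈ L(μ)` with `E^π[l] > 0`; hence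
`sup_{l ∈ L(μ)} E^π[l]` equals `0` if `π` is causal and `+∞` otherwise
(since `L(μ)` is a cone). -/
theorem causal_test_characteristic_function
    {X Y : Type*} {T : ℕ} [Fintype X] [Fintype Y] [DecidableEq X]
    (μ : (Fin T → X) → ℝ) (ν : (Fin T → Y) → ℝ)
    (hμpos : ∀ x, 0 ≤ μ x) (hμsum : ∑ x, μ x = 1)
    (hνpos : ∀ y, 0 ≤ ν y) (hνsum : ∑ y, ν y = 1)
    (π : ((Fin T → X) × (Fin T → Y)) → ℝ) (hπ : IsCouplingOf μ ν π) :
    (CausalCoupling π → ∀ l, InLmu μ l → expCost π l = 0) ∧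
    (¬ CausalCoupling π → ∃ l, InLmu μ l ∧ 0 < expCost π l) ∧
    ((⨆ l : {l // InLmu μ l}, ((expCost π l.1 : ℝ) : EReal))
      = if CausalCoupling π then (0 : EReal) else ⊤) :=
  causal_test_characteristic_function_general μ ν hμpos π hπ
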